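/- Let k be a field with char k ≠ 2, let (G,D) be a 3-transposition group with D finite, and let M = M_{1/2}(k,(G,D)). A k-linear map d: M → M is a derivation of M if and only if the following hold for all a,b,c,e ∈ D: (R1) d(a)_a = 0; (R2) d(a)_b = −d(a)_{b^a} whenever a ⊥̸ b; (R3) d(a)_b = 0 whenever a ⊥ b; (R4) d(a)_c + d(b)_c + d(a)_{c^{ab}} + d(b)_{c^{ab}} = 0 whenever a ⊥ b, c ⊥̸ a and c ⊥̸ b, where c^{ab} = (c^a)^b; (R5) d(a^b)_e = d(a)_e + d(b)_{e^a} whenever a ⊥̸ b, a ⊥̸ e and b ⊥ e; (R6) d(a^b)_e = d(a)_{e^b} + d(b)_{e^a} whenever a ⊥̸ b, e ⊥̸ a, e ⊥̸ b and e ⊥̸ a^b; (R7) 2·d(b)_a + d(a)_b + d(a^b)_a − Σ_{e ∈ D, a ⊥ e, b ⊥̸ e} d(b)_e = 0 whenever a ⊥̸ b. -/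

import Mathlib

noncomputable section
attribute [local instance] Classical.propDecidable

namespace Paper
/-! ### Basics on 3-transposition groups -/

/-- Conjugation `a^b = b⁻¹ a b`. -/
def conjBy {G : Type*} [Group G] (a b : G) : G := b⁻¹ * a * b

/-- `(G, D)` is a 3-transposition group: `D` is a generating conjugacy class of
involutions such that the product of any two of its elements has order at most 3. -/
structure Is3TG (G : Type*) [Group G] (D : Set G) : Prop where
  nonempty : D.Nonempty
  conj_mem : ∀ a ∈ D, ∀ g : G, conjBy a g ∈ D
  is_conj : ∀ a ∈ D, ∀ b ∈ D, IsConj a b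
  order_two : ∀ a ∈ D, orderOf a = 2
  gen : Subgroup.closure D = ⊤
  order_mul_le : ∀ a ∈ D, ∀ b ∈ D, orderOf (a * b) ≤ 3

/-- A subset `S` is closed under the (abstract) conjugation map `τ`. -/
def SelfConj {X : Type*} (τ : X → X → X) (S : Set X) : Prop := ∀ a ∈ S, ∀ b ∈ S, τ a b ∈ S

/-- The conjugation map restricted to a self-conjugation-closed subset. -/
def setConj {X : Type*} {τ : X → X → X} {S : Set X} (h : SelfConj τ S) (a b : ↥S) : ↥S :=
  ⟨τ a.1 b.1, h a.1 a.2 b.1 b.2⟩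

lemma Is3TG.selfConj {G : Type*} [Group G] {D : Set G} (hD : Is3TG G D) :
    SelfConj conjBy D := fun a ha b _ => hD.conj_mem a ha b

lemma Is3TG.selfConj_inter {G : Type*} [Group G] {D : Set G} (hD : Is3TG G D) (H : Subgroup G) :
    SelfConj conjBy ((H : Set G) ∩ D) := by
  rintro a ⟨haH, haD⟩ b ⟨hbH, hbD⟩
  exact ⟨H.mul_mem (H.mul_mem (H.inv_mem hbH) haH) hbH, hD.conj_mem a haD b⟩
/-! ### Matsuo algebras and derivations -/

/-- The basis vector of the Matsuo algebra corresponding to a transposition. -/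
def bvec (k : Type*) [Field k] {X : Type*} (a : X) : X → k := Pi.single a 1

/-- Product of two basis elements of the Matsuo algebra of an abstract conjugation
structure `τ` on `X` (two distinct elements commute iff `τ a b = a`). -/
def matsuoBasis (k : Type*) [Field k] {X : Type*} (η : k) (τ : X → X → X) (a b : X) :
    X → k :=
  if a = b then Pi.single a 1
  else if τ a b = a then 0
  else (η / 2) • (Pi.single a 1 + Pi.single b 1 - Pi.single (τ a b) 1)

/-- The multiplication of the Matsuo algebra with parameter `η` of an abstract
conjugation structure `τ` on a finite set `X`. -/
def matsuoMul (k : Type*) [Field k] {X : Type*} [Fintype X] (η : k) (τ : X → X → X)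
    (f g : X → k) : X → k :=
  ∑ a : X, ∑ b : X, (f a * g b) • matsuoBasis k η τ a b

/-- Product of two basis elements of the Matsuo algebra `M_η(k, (G, D))`. -/
def matsuoBasisD (k : Type*) [Field k] {G : Type*} [Group G] {D : Set G}
    (h : SelfConj conjBy D) (η : k) (a b : ↥D) : ↥D → k :=
  if a = b then Pi.single a 1
  else if orderOf (a.1 * b.1) = 3 then
    (η / 2) • (Pi.single a 1 + Pi.single b 1 - Pi.single (setConj h a b) 1)
  else 0

/-- The multiplication of the Matsuo algebra `M_η(k, (G, D))` on the vector space `↥D → k`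
with basis `D`. -/
def matsuoMulD (k : Type*) [Field k] {G : Type*} [Group G] {D : Set G} [Fintype ↥D]
    (h : SelfConj conjBy D) (η : k) (f g : ↥D → k) : ↥D → k :=
  ∑ a : ↥D, ∑ b : ↥D, (f a * g b) • matsuoBasisD k h η a b

/-- A linear map `d` is a derivation of the (non-associative) algebra with
multiplication `mul`. -/
def IsDerivation (k : Type*) [Field k] {V : Type*} [AddCommGroup V] [Module k V]
    (mul : V → V → V) (d : V →ₗ[k] V) : Prop :=
  ∀ f g : V, d (mul f g) = mul (d f) g + mul f (d g)

set_option linter.unusedSectionVars false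

section GroupAux
variable {G : Type*} [Group G] {D : Set G} {a b c g x y : G}

lemma Is3TG.sq (hD : Is3TG G D) (ha : a ∈ D) : a * a = 1 := by
  have h2 : a ^ 2 = 1 := by rw [← hD.order_two a ha]; exact pow_orderOf_eq_one a
  rw [pow_two] at h2; exact h2

lemma Is3TG.inv_eq (hD : Is3TG G D) (ha : a ∈ D) : a⁻¹ = a :=
  inv_eq_of_mul_eq_one_right (hD.sq ha)

lemma Is3TG.ne_one (hD : Is3TG G D) (ha : a ∈ D) : a ≠ 1 := by
  intro h
  have := hD.order_two a ha
  rw [h, orderOf_one] at this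
  omega

lemma conjBy_self (g : G) : conjBy g g = g := by
  simp [conjBy]

lemma orderOf_conjBy (x g : G) : orderOf (conjBy x g) = orderOf x := by
  have : conjBy x g = (MulAut.conj g⁻¹) x := by
    simp [conjBy, MulAut.conj_apply]
  rw [this, MulEquiv.orderOf_eq]

lemma conjBy_mul (x y g : G) : conjBy x g * conjBy y g = conjBy (x * y) g := by
  simp [conjBy, mul_assoc]

lemma conjBy_conjBy_mul (x a b : G) : conjBy (conjBy x a) b = conjBy x (a * b) := by
  simp [conjBy, mul_assoc]

lemma orderOf_mul_comm' (x y : G) : orderOf (x * y) = orderOf (y * x) := by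
  have : conjBy (x * y) x = y * x := by
    simp [conjBy, mul_assoc]
  rw [← this, orderOf_conjBy]

lemma orderOf_conjBy_mul_conjBy (x y g : G) :
    orderOf (conjBy x g * conjBy y g) = orderOf (x * y) := by
  rw [conjBy_mul, orderOf_conjBy]

lemma orderOf_conjBy_mul (hy : y * g = g * y) :
    orderOf (conjBy x g * y) = orderOf (x * y) := by
  have h1 : conjBy y g = y := by
    simp only [conjBy, mul_assoc, hy]
    rw [← mul_assoc, inv_mul_cancel, one_mul]
  calc orderOf (conjBy x g * y) = orderOf (conjBy x g * conjBy y g) := by rw [h1]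
  _ = orderOf (x * y) := orderOf_conjBy_mul_conjBy x y g

lemma orderOf_mul_conjBy (hx : x * g = g * x) :
    orderOf (x * conjBy y g) = orderOf (x * y) := by
  have h1 : conjBy x g = x := by
    simp only [conjBy, mul_assoc, hx]
    rw [← mul_assoc, inv_mul_cancel, one_mul]
  calc orderOf (x * conjBy y g) = orderOf (conjBy x g * conjBy y g) := by rw [h1]
  _ = orderOf (x * y) := orderOf_conjBy_mul_conjBy x y g

lemma conjBy_eq_of_commute (h : x * g = g * x) : conjBy x g = x := by
  simp only [conjBy, mul_assoc, h]
  rw [← mul_assoc, inv_mul_cancel, one_mul]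

lemma conjBy_conjBy (hg : g * g = 1) (x : G) : conjBy (conjBy x g) g = x := by
  have hinv : g⁻¹ = g := inv_eq_of_mul_eq_one_right hg
  simp only [conjBy, hinv, mul_assoc, hg, mul_one]
  rw [← mul_assoc, hg, one_mul]

lemma commute_of_conjBy_eq (h : conjBy x g = x) : x * g = g * x := by
  have := h
  simp only [conjBy] at this
  calc x * g = g * (g⁻¹ * x * g) := by simp [mul_assoc]
  _ = g * x := by rw [this]

lemma Is3TG.orderOf_mul_ne_zero (hD : Is3TG G D) (hDfin : D.Finite)
    (ha : a ∈ D) (hb : b ∈ D) : orderOf (a * b) ≠ 0 := by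
  intro h0
  set x := a * b with hx
  have hfin : ¬ IsOfFinOrder x := orderOf_eq_zero_iff.mp h0
  have hinj : Function.Injective (fun n : ℕ => x ^ n) :=
    injective_pow_iff_not_isOfFinOrder.mpr hfin
  have hainv : a⁻¹ = a := hD.inv_eq ha
  have hkey : ∀ n : ℕ, a * x ^ n * a = (x ^ n)⁻¹ := by
    intro n
    have h1 : a * x * a⁻¹ = x⁻¹ := by
      rw [hainv, hx]
      rw [show a * (a * b) * a = a * a * (b * a) by group, hD.sq ha, one_mul]
      rw [mul_inv_rev, hD.inv_eq ha, hD.inv_eq hb]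
    rw [hainv] at h1
    calc a * x ^ n * a = (a * x * a) ^ n := by
          induction n with
          | zero => simp [hD.sq ha]
          | succ m ih =>
            rw [pow_succ, pow_succ, ← ih]
            rw [show a * x ^ m * a * (a * x * a) = a * x ^ m * (a * a) * x * a by group,
              hD.sq ha]
            group
    _ = (x ^ n)⁻¹ := by rw [h1, inv_pow]
  have hmem : ∀ n : ℕ, a * x ^ (2 * n) ∈ D := by
    intro n
    have : a * x ^ (2 * n) = conjBy a (x ^ n) := by
      rw [conjBy, ← hkey n]
      rw [show a * x ^ n * a * a * x ^ n = a * x ^ n * (a * a) * x ^ n by group, hD.sq ha]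
      rw [two_mul, pow_add]
      group
    rw [this]
    exact hD.conj_mem a ha _
  have hinj2 : Function.Injective (fun n : ℕ => a * x ^ (2 * n)) := by
    intro m n h
    simp only [mul_right_inj] at h
    have := hinj h
    omega
  exact Set.infinite_of_injective_forall_mem hinj2 hmem hDfin

lemma Is3TG.order_dichotomy (hD : Is3TG G D) (hDfin : D.Finite)
    (ha : a ∈ D) (hb : b ∈ D) (hne : a ≠ b) :
    orderOf (a * b) = 2 ∨ orderOf (a * b) = 3 := by
  have h3 := hD.order_mul_le a ha b hb
  have h0 := hD.orderOf_mul_ne_zero hDfin ha hb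
  have h1 : orderOf (a * b) ≠ 1 := by
    intro h
    have h' := orderOf_eq_one_iff.mp h
    exact hne ((eq_inv_of_mul_eq_one_left h').trans (hD.inv_eq hb))
  omega

lemma Is3TG.orderOf_eq_two (hD : Is3TG G D) (ha : a ∈ D) (hb : b ∈ D)
    (hne : a ≠ b) (hc : a * b = b * a) : orderOf (a * b) = 2 := by
  have h2 : (a * b) ^ 2 = 1 := by
    rw [pow_two, show a * b * (a * b) = a * (b * a) * b by group, ← hc]
    rw [show a * (a * b) * b = (a * a) * (b * b) by group, hD.sq ha, hD.sq hb, one_mul]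
  refine orderOf_eq_prime h2 ?_
  intro h
  exact hne ((eq_inv_of_mul_eq_one_left h).trans (hD.inv_eq hb))

lemma Is3TG.commute_of_ne_three (hD : Is3TG G D) (hDfin : D.Finite)
    (ha : a ∈ D) (hb : b ∈ D) (h : orderOf (a * b) ≠ 3) : a * b = b * a := by
  by_cases hne : a = b
  · subst hne; rfl
  rcases hD.order_dichotomy hDfin ha hb hne with h2 | h3
  · have : (a * b) ^ 2 = 1 := by rw [← h2]; exact pow_orderOf_eq_one _
    rw [pow_two] at this
    have h4 := eq_inv_of_mul_eq_one_left this
    rw [h4, mul_inv_rev, hD.inv_eq ha, hD.inv_eq hb]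
  · exact absurd h3 h

lemma Is3TG.not_commute_of_three (hD : Is3TG G D) (ha : a ∈ D) (hb : b ∈ D)
    (h : orderOf (a * b) = 3) : a * b ≠ b * a := by
  intro hc
  have h2 : (a * b) ^ 2 = 1 := by
    rw [pow_two, show a * b * (a * b) = a * (b * a) * b by group, ← hc]
    rw [show a * (a * b) * b = (a * a) * (b * b) by group, hD.sq ha, hD.sq hb, one_mul]
  have := orderOf_dvd_of_pow_eq_one h2
  rw [h] at this
  omega

lemma Is3TG.braid (hD : Is3TG G D) (ha : a ∈ D) (hb : b ∈ D)
    (h3 : orderOf (a * b) = 3) : a * b * a = b * a * b := by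
  have h : (a * b) ^ 3 = 1 := by rw [← h3]; exact pow_orderOf_eq_one _
  have h' := h
  rw [pow_succ, pow_succ, pow_one] at h'
  have h1 : (a * b * a) * (b * a * b) = 1 := by
    rw [← h']; simp only [mul_assoc]
  rw [eq_inv_of_mul_eq_one_left h1, mul_inv_rev, mul_inv_rev,
    hD.inv_eq ha, hD.inv_eq hb, ← mul_assoc]

end GroupAux

lemma orderOf_mul_conjBy_flip {G : Type*} [Group G] {b : G} (hb : b * b = 1) (x y : G) :
    orderOf (x * conjBy y b) = orderOf (conjBy x b * y) := by
  rw [← orderOf_conjBy (x * conjBy y b) b, ← conjBy_mul, conjBy_conjBy hb]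

section SubAux
variable {G : Type*} [Group G] {D : Set G}

lemma coe_setConj (hD : Is3TG G D) (a b : ↥D) : (setConj hD.selfConj a b : G) = conjBy a.1 b.1 := rfl

lemma setConj_setConj (hD : Is3TG G D) (a b : ↥D) : setConj hD.selfConj (setConj hD.selfConj a b) b = a := by
  apply Subtype.ext
  rw [coe_setConj hD, coe_setConj hD]
  exact conjBy_conjBy (hD.sq b.2) a.1

lemma orderOf_setConj_mul_setConj (hD : Is3TG G D) (x y g : ↥D) :
    orderOf ((setConj hD.selfConj x g : G) * (setConj hD.selfConj y g : G))
      = orderOf ((x : G) * y) := by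
  rw [coe_setConj hD, coe_setConj hD]
  exact orderOf_conjBy_mul_conjBy _ _ _

lemma ne_of_orderOf_ne_one (hD : Is3TG G D) (x y : ↥D) (h : orderOf ((x : G) * y) ≠ 1) : x ≠ y := by
  intro he; subst he
  exact h (by rw [hD.sq x.2, orderOf_one])

lemma coe_ne_of_orderOf_ne_one (hD : Is3TG G D) (x y : ↥D) (h : orderOf ((x : G) * y) ≠ 1) : (x : G) ≠ y := by
  intro he
  exact ne_of_orderOf_ne_one hD x y h (Subtype.ext he)

end SubAux

section AlgAux
variable {k : Type*} [Field k] {G : Type*} [Group G] {D : Set G} [Fintype ↥D]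
variable {h : SelfConj conjBy D} {η : k}

lemma bvec_apply {X : Type*} (a b : X) : bvec k a b = if b = a then (1:k) else 0 := by
  simp [bvec, Pi.single_apply]

lemma bvec_expand (f : ↥D → k) : f = ∑ a : ↥D, f a • bvec k a := by
  funext j
  rw [Finset.sum_apply]
  simp [bvec_apply, mul_ite, Finset.sum_ite_eq]

lemma matsuoMulD_zero_left (g : ↥D → k) : matsuoMulD k h η 0 g = 0 := by
  simp [matsuoMulD]

lemma matsuoMulD_add_left (f f' g : ↥D → k) :
    matsuoMulD k h η (f + f') g = matsuoMulD k h η f g + matsuoMulD k h η f' g := by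
  unfold matsuoMulD
  rw [← Finset.sum_add_distrib]
  refine Finset.sum_congr rfl fun a _ => ?_
  rw [← Finset.sum_add_distrib]
  refine Finset.sum_congr rfl fun b _ => ?_
  simp [add_mul, add_smul]

lemma matsuoMulD_smul_left (c : k) (f g : ↥D → k) :
    matsuoMulD k h η (c • f) g = c • matsuoMulD k h η f g := by
  unfold matsuoMulD
  rw [Finset.smul_sum]
  refine Finset.sum_congr rfl fun a _ => ?_
  rw [Finset.smul_sum]
  refine Finset.sum_congr rfl fun b _ => ?_
  simp [mul_assoc, smul_smul]

lemma matsuoMulD_zero_right (f : ↥D → k) : matsuoMulD k h η f 0 = 0 := by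
  simp [matsuoMulD]

lemma matsuoMulD_add_right (f g g' : ↥D → k) :
    matsuoMulD k h η f (g + g') = matsuoMulD k h η f g + matsuoMulD k h η f g' := by
  unfold matsuoMulD
  rw [← Finset.sum_add_distrib]
  refine Finset.sum_congr rfl fun a _ => ?_
  rw [← Finset.sum_add_distrib]
  refine Finset.sum_congr rfl fun b _ => ?_
  simp [mul_add, add_smul]

lemma matsuoMulD_smul_right (c : k) (f g : ↥D → k) :
    matsuoMulD k h η f (c • g) = c • matsuoMulD k h η f g := by
  unfold matsuoMulD
  rw [Finset.smul_sum]
  refine Finset.sum_congr rfl fun a _ => ?_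
  rw [Finset.smul_sum]
  refine Finset.sum_congr rfl fun b _ => ?_
  simp [smul_smul]
  ring_nf

lemma matsuoMulD_sum_left {ι : Type*} (s : Finset ι) (F : ι → (↥D → k)) (g : ↥D → k) :
    matsuoMulD k h η (∑ i ∈ s, F i) g = ∑ i ∈ s, matsuoMulD k h η (F i) g := by
  classical
  induction s using Finset.induction_on with
  | empty => simp [matsuoMulD_zero_left]
  | insert _ _ hnot ih =>
    rw [Finset.sum_insert hnot, Finset.sum_insert hnot, matsuoMulD_add_left, ih]

lemma matsuoMulD_sum_right {ι : Type*} (s : Finset ι) (f : ↥D → k) (F : ι → (↥D → k)) :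
    matsuoMulD k h η f (∑ i ∈ s, F i) = ∑ i ∈ s, matsuoMulD k h η f (F i) := by
  classical
  induction s using Finset.induction_on with
  | empty => simp [matsuoMulD_zero_right]
  | insert _ _ hnot ih =>
    rw [Finset.sum_insert hnot, Finset.sum_insert hnot, matsuoMulD_add_right, ih]

lemma matsuoMulD_bvec_bvec (a b : ↥D) :
    matsuoMulD k h η (bvec k a) (bvec k b) = matsuoBasisD k h η a b := by
  unfold matsuoMulD
  rw [Finset.sum_eq_single a]
  · rw [Finset.sum_eq_single b]
    · simp [bvec_apply]
    · intro b' _ hb'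
      simp [bvec_apply, hb']
    · intro hb; exact absurd (Finset.mem_univ b) hb
  · intro a' _ ha'
    apply Finset.sum_eq_zero
    intro b' _
    simp [bvec_apply, ha']
  · intro ha; exact absurd (Finset.mem_univ a) ha

lemma d_expand (d : (↥D → k) →ₗ[k] (↥D → k)) (f : ↥D → k) :
    d f = ∑ a : ↥D, f a • d (bvec k a) := by
  conv_lhs => rw [bvec_expand f]
  rw [map_sum]
  simp [map_smul]

lemma isDerivation_iff_basis (d : (↥D → k) →ₗ[k] (↥D → k)) :
    IsDerivation k (matsuoMulD k h η) d ↔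
      ∀ a b : ↥D, d (matsuoBasisD k h η a b) =
        matsuoMulD k h η (d (bvec k a)) (bvec k b)
          + matsuoMulD k h η (bvec k a) (d (bvec k b)) := by
  constructor
  · intro hd a b
    have := hd (bvec k a) (bvec k b)
    rwa [matsuoMulD_bvec_bvec] at this
  · intro hbas f g
    have e1 : d (matsuoMulD k h η f g)
        = ∑ a : ↥D, ∑ b : ↥D, (f a * g b) •
            (matsuoMulD k h η (d (bvec k a)) (bvec k b)
              + matsuoMulD k h η (bvec k a) (d (bvec k b))) := by
      unfold matsuoMulD
      rw [map_sum]
      refine Finset.sum_congr rfl fun a _ => ?_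
      rw [map_sum]
      refine Finset.sum_congr rfl fun b _ => ?_
      rw [map_smul, hbas a b]
      rfl
    rw [e1]
    have e2 : matsuoMulD k h η (d f) g
        = ∑ a : ↥D, ∑ b : ↥D, (f a * g b) • matsuoMulD k h η (d (bvec k a)) (bvec k b) := by
      rw [d_expand d f, matsuoMulD_sum_left]
      refine Finset.sum_congr rfl fun a _ => ?_
      rw [matsuoMulD_smul_left]
      conv_lhs => rw [bvec_expand g, matsuoMulD_sum_right, Finset.smul_sum]
      refine Finset.sum_congr rfl fun b _ => ?_
      rw [matsuoMulD_smul_right, smul_smul]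
    have e3 : matsuoMulD k h η f (d g)
        = ∑ a : ↥D, ∑ b : ↥D, (f a * g b) • matsuoMulD k h η (bvec k a) (d (bvec k b)) := by
      conv_lhs => rw [bvec_expand f]
      rw [matsuoMulD_sum_left]
      refine Finset.sum_congr rfl fun a _ => ?_
      rw [matsuoMulD_smul_left]
      conv_lhs => rw [d_expand d g, matsuoMulD_sum_right, Finset.smul_sum]
      refine Finset.sum_congr rfl fun b _ => ?_
      rw [matsuoMulD_smul_right, smul_smul]
    rw [e2, e3, ← Finset.sum_add_distrib]
    refine Finset.sum_congr rfl fun a _ => ?_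
    rw [← Finset.sum_add_distrib]
    refine Finset.sum_congr rfl fun b _ => ?_
    rw [smul_add]

end AlgAux


section LineAux
variable {G : Type*} [Group G] {D : Set G}

lemma setConj_comm (hD : Is3TG G D) {a b : ↥D} (h3 : orderOf ((a:G) * b) = 3) :
    setConj hD.selfConj a b = setConj hD.selfConj b a := by
  apply Subtype.ext
  rw [coe_setConj hD, coe_setConj hD]
  show (b:G)⁻¹ * a * b = (a:G)⁻¹ * b * a
  rw [hD.inv_eq b.2, hD.inv_eq a.2]
  exact (hD.braid a.2 b.2 h3).symm

lemma orderOf_mul_setConj_right (hD : Is3TG G D) {a b : ↥D}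
    (h3 : orderOf ((a:G) * b) = 3) :
    orderOf ((a:G) * (setConj hD.selfConj a b : G)) = 3 := by
  rw [coe_setConj hD]
  have he : (a:G) * conjBy (a:G) (b:G) = ((a:G) * b) ^ 2 := by
    rw [conjBy, hD.inv_eq b.2, pow_two]
    simp [mul_assoc]
  rw [he]
  have hfo : IsOfFinOrder ((a:G) * b) := by
    rw [← orderOf_pos_iff, h3]; norm_num
  rw [hfo.orderOf_pow, h3]
  norm_num

lemma orderOf_mul_setConj_left (hD : Is3TG G D) {a b : ↥D}
    (h3 : orderOf ((a:G) * b) = 3) :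
    orderOf ((b:G) * (setConj hD.selfConj a b : G)) = 3 := by
  rw [coe_setConj hD]
  have he : (b:G) * conjBy (a:G) (b:G) = (a:G) * b := by
    rw [conjBy, hD.inv_eq b.2, ← mul_assoc, ← mul_assoc, hD.sq b.2, one_mul]
  rw [he, h3]

end LineAux

section AlgAux2
variable {k : Type*} [Field k] {G : Type*} [Group G] {D : Set G} [Fintype ↥D]
variable {h : SelfConj conjBy D} {η : k}

lemma matsuoBasisD_apply (c b e : ↥D) :
    matsuoBasisD k h η c b e =
      if c = b then (if e = b then (1:k) else 0)
      else if orderOf ((c:G) * b) = 3 then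
        (η/2) * ((if e = c then (1:k) else 0) + (if e = b then 1 else 0)
          - (if e = setConj h c b then 1 else 0))
      else 0 := by
  unfold matsuoBasisD
  rcases eq_or_ne c b with rfl | hne
  · simp [Pi.single_apply]
  · rw [if_neg hne, if_neg hne]
    by_cases h3 : orderOf ((c:G) * b) = 3
    · rw [if_pos h3, if_pos h3]
      simp [Pi.single_apply, mul_sub, mul_add]
    · rw [if_neg h3, if_neg h3]
      rfl


lemma matsuoBasisD_self (a : ↥D) : matsuoBasisD k h η a a = bvec k a := by
  funext e
  rw [matsuoBasisD_apply, if_pos rfl, bvec_apply]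
  split_ifs <;> rfl

lemma matsuoBasisD_of_three {a b : ↥D} (hne : a ≠ b) (h3 : orderOf ((a:G) * b) = 3) :
    matsuoBasisD k h η a b
      = (η/2) • (bvec k a + bvec k b - bvec k (setConj h a b)) := by
  funext e
  rw [matsuoBasisD_apply, if_neg hne, if_pos h3]
  simp only [Pi.smul_apply, Pi.add_apply, Pi.sub_apply, smul_eq_mul, bvec_apply]
  split_ifs <;> ring

lemma matsuoBasisD_of_two {a b : ↥D} (hne : a ≠ b) (h3 : orderOf ((a:G) * b) ≠ 3) :
    matsuoBasisD k h η a b = 0 := by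
  simp [matsuoBasisD, hne, h3]

lemma matsuoBasisD_comm (hD : Is3TG G D) (η : k) (a b : ↥D) :
    matsuoBasisD k hD.selfConj η a b = matsuoBasisD k hD.selfConj η b a := by
  rcases eq_or_ne a b with rfl | hne
  · rfl
  · by_cases h3 : orderOf ((a:G) * b) = 3
    · rw [matsuoBasisD_of_three hne h3,
        matsuoBasisD_of_three hne.symm (by rw [orderOf_mul_comm' (b:G) a]; exact h3),
        setConj_comm hD h3, add_comm (bvec k a)]
    · rw [matsuoBasisD_of_two hne h3,
        matsuoBasisD_of_two hne.symm (by rw [orderOf_mul_comm' (b:G) a]; exact h3)]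

lemma matsuoMulD_comm (hD : Is3TG G D) (η : k) (f g : ↥D → k) :
    matsuoMulD k hD.selfConj η f g = matsuoMulD k hD.selfConj η g f := by
  unfold matsuoMulD
  rw [Finset.sum_comm]
  refine Finset.sum_congr rfl fun b _ => Finset.sum_congr rfl fun a _ => ?_
  rw [mul_comm, matsuoBasisD_comm hD]

lemma matsuoMulD_bvec_right_apply (f : ↥D → k) (b e : ↥D) :
    matsuoMulD k h η f (bvec k b) e = ∑ c : ↥D, f c * matsuoBasisD k h η c b e := by
  unfold matsuoMulD
  rw [Finset.sum_apply]
  refine Finset.sum_congr rfl fun c _ => ?_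
  rw [Finset.sum_apply]
  rw [Finset.sum_eq_single b]
  · simp [bvec_apply]
  · intro b' _ hb'
    simp [bvec_apply, hb']
  · intro hb; exact absurd (Finset.mem_univ b) hb

lemma coefFormula (hD : Is3TG G D) (η : k) (f : ↥D → k) (b e : ↥D) :
    matsuoMulD k hD.selfConj η f (bvec k b) e =
      (if e = b then f b + (η/2) * (∑ c ∈ Finset.univ.filter
            (fun c : ↥D => orderOf ((c:G) * (b:G)) = 3), f c) else 0)
      + (if orderOf ((e:G) * (b:G)) = 3 then
          (η/2) * (f e - f (setConj hD.selfConj e b)) else 0) := by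
  classical
  have hbb : orderOf ((b:G) * (b:G)) = 1 := by rw [hD.sq b.2, orderOf_one]
  set s := Finset.univ.filter (fun c : ↥D => orderOf ((c:G) * (b:G)) = 3) with hs
  have hsmem : ∀ c : ↥D, c ∈ s ↔ orderOf ((c:G) * (b:G)) = 3 := by
    intro c; simp [hs]
  have hσmem : ∀ c : ↥D, c ∈ s → setConj hD.selfConj c b ∈ s := by
    intro c hc
    rw [hsmem] at hc ⊢
    rw [coe_setConj hD, orderOf_conjBy_mul rfl]
    exact hc
  rw [matsuoMulD_bvec_right_apply]
  rw [← Finset.add_sum_erase Finset.univ _ (Finset.mem_univ b)]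
  have hset : (Finset.univ.erase b).filter
      (fun c : ↥D => orderOf ((c:G) * (b:G)) = 3) = s := by
    ext c
    constructor
    · intro hc
      rw [Finset.mem_filter] at hc
      rw [hsmem]
      exact hc.2
    · intro hc
      rw [hsmem] at hc
      rw [Finset.mem_filter]
      refine ⟨Finset.mem_erase.mpr ⟨?_, Finset.mem_univ c⟩, hc⟩
      rintro rfl
      rw [hbb] at hc
      omega
  have herase : ∑ c ∈ Finset.univ.erase b, f c * matsuoBasisD k hD.selfConj η c b e
      = ∑ c ∈ s, f c * ((η/2) * ((if e = c then (1:k) else 0) + (if e = b then 1 else 0)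
            - (if e = setConj hD.selfConj c b then 1 else 0))) := by
    rw [← hset, Finset.sum_filter]
    refine Finset.sum_congr rfl fun c hc => ?_
    have hcb : c ≠ b := (Finset.mem_erase.mp hc).1
    rw [matsuoBasisD_apply, if_neg hcb]
    by_cases h3 : orderOf ((c:G) * (b:G)) = 3
    · rw [if_pos h3, if_pos h3]
    · rw [if_neg h3, if_neg h3, mul_zero]
  rw [herase, matsuoBasisD_apply, if_pos rfl]
  by_cases heb : e = b
  · subst heb
    rw [if_pos rfl, if_pos rfl, if_neg (by rw [hbb]; omega), add_zero]
    have hterm : ∀ c ∈ s, f c * ((η/2) * ((if e = c then (1:k) else 0)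
          + 1 - (if e = setConj hD.selfConj c e then 1 else 0)))
        = (η/2) * f c := by
      intro c hc
      rw [hsmem] at hc
      have h1 : (if e = c then (1:k) else 0) = 0 := by
        rw [if_neg]
        rintro rfl
        rw [hbb] at hc; omega
      have h2 : (if e = setConj hD.selfConj c e then (1:k) else 0) = 0 := by
        rw [if_neg]
        intro hec
        have h4 : setConj hD.selfConj e e = setConj hD.selfConj (setConj hD.selfConj c e) e := by
          rw [← hec]
        rw [setConj_setConj hD c e] at h4
        have hee : setConj hD.selfConj e e = e := Subtype.ext (conjBy_self (e : G))
        rw [hee] at h4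
        subst h4
        rw [hbb] at hc
        omega
      rw [h1, h2]
      ring
    rw [Finset.sum_congr rfl hterm, mul_one, ← Finset.mul_sum]
  · rw [if_neg heb, if_neg heb, mul_zero, zero_add, zero_add]
    have hterm : ∀ c ∈ s, f c * ((η/2) * ((if e = c then (1:k) else 0)
          + 0 - (if e = setConj hD.selfConj c b then 1 else 0)))
        = (if e = c then (η/2) * f c else 0)
          - (if e = setConj hD.selfConj c b then (η/2) * f c else 0) := by
      intro c _
      split_ifs <;> ring
    rw [Finset.sum_congr rfl hterm, Finset.sum_sub_distrib]
    have hT1 : ∑ c ∈ s, (if e = c then (η/2) * f c else 0)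
        = if orderOf ((e:G) * (b:G)) = 3 then (η/2) * f e else 0 := by
      rw [Finset.sum_ite_eq]
      by_cases h3 : orderOf ((e:G) * (b:G)) = 3
      · rw [if_pos ((hsmem e).mpr h3), if_pos h3]
      · rw [if_neg (fun hc => h3 ((hsmem e).mp hc)), if_neg h3]
    have hT2 : ∑ c ∈ s, (if e = setConj hD.selfConj c b then (η/2) * f c else 0)
        = if orderOf ((e:G) * (b:G)) = 3 then (η/2) * f (setConj hD.selfConj e b) else 0 := by
      have hre : ∑ c ∈ s, (if e = setConj hD.selfConj c b then (η/2) * f c else 0)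
          = ∑ c ∈ s, (if e = c then (η/2) * f (setConj hD.selfConj c b) else 0) := by
        refine Finset.sum_nbij' (fun c => setConj hD.selfConj c b)
          (fun c => setConj hD.selfConj c b) hσmem hσmem
          (fun c _ => setConj_setConj hD c b) (fun c _ => setConj_setConj hD c b)
          (fun c hc => ?_)
        rw [setConj_setConj hD c b]
      rw [hre, Finset.sum_ite_eq]
      by_cases h3 : orderOf ((e:G) * (b:G)) = 3
      · rw [if_pos ((hsmem e).mpr h3), if_pos h3]
      · rw [if_neg (fun hc => h3 ((hsmem e).mp hc)), if_neg h3]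
    rw [hT1, hT2]
    by_cases h3 : orderOf ((e:G) * (b:G)) = 3
    · rw [if_pos h3, if_pos h3, if_pos h3]
      ring
    · rw [if_neg h3, if_neg h3, if_neg h3]
      ring

end AlgAux2

section SumAux
variable {k : Type*} [Field k]

lemma sum_invol_zero {X : Type*} {s : Finset X} (f : X → k) (σ : X → X)
    (hmem : ∀ c ∈ s, σ c ∈ s) (hinv : ∀ c ∈ s, σ (σ c) = c)
    (hne : ∀ c ∈ s, σ c ≠ c) (hanti : ∀ c ∈ s, f (σ c) = - f c) :
    ∑ c ∈ s, f c = 0 :=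
  Finset.sum_involution (fun c _ => σ c)
    (fun c hc => by rw [hanti c hc]; ring)
    (fun c hc _ => hne c hc)
    (fun c hc => hmem c hc)
    (fun c hc => hinv c hc)

variable {G : Type*} [Group G] {D : Set G} [Fintype ↥D]

/-- Sum over the `c ⊥̸ b` filter in the orientation used by `coefFormula`. -/
lemma filter_orderOf_comm (a : ↥D) :
    Finset.univ.filter (fun c : ↥D => orderOf ((c:G) * (a:G)) = 3)
      = Finset.univ.filter (fun c : ↥D => orderOf ((a:G) * (c:G)) = 3) := by
  ext c
  simp only [Finset.mem_filter, Finset.mem_univ, true_and]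
  rw [orderOf_mul_comm']

lemma sumZ (hD : Is3TG G D) (f : ↥D → k) (b : ↥D)
    (hR2 : ∀ c : ↥D, orderOf ((b:G) * c) = 3 →
      f c = - f (setConj hD.selfConj c b)) :
    ∑ c ∈ Finset.univ.filter (fun c : ↥D => orderOf ((b:G) * (c:G)) = 3), f c = 0 := by
  refine sum_invol_zero f (fun c => setConj hD.selfConj c b) ?_ ?_ ?_ ?_
  · intro c hc
    rw [Finset.mem_filter] at hc ⊢
    refine ⟨Finset.mem_univ _, ?_⟩
    rw [coe_setConj hD, orderOf_mul_conjBy rfl]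
    exact hc.2
  · intro c _; exact setConj_setConj hD c b
  · intro c hc heq
    rw [Finset.mem_filter] at hc
    have h3 : orderOf ((c:G) * b) = 3 := by rw [orderOf_mul_comm']; exact hc.2
    refine hD.not_commute_of_three c.2 b.2 h3 ?_
    exact commute_of_conjBy_eq (congrArg Subtype.val heq)
  · intro c hc
    rw [Finset.mem_filter] at hc
    have := hR2 c hc.2
    linear_combination this

lemma sumC (hD : Is3TG G D) (f : ↥D → k) {a b : ↥D}
    (hab : (a:G) ≠ (b:G)) (hcomm : (a:G) * (b:G) = (b:G) * (a:G))
    (hR2 : ∀ c : ↥D, orderOf ((b:G) * c) = 3 →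
      f c = - f (setConj hD.selfConj c b))
    (hR3 : ∀ c : ↥D, (b:G) ≠ c → orderOf ((b:G) * c) = 2 → f c = 0) :
    ∑ c ∈ Finset.univ.filter (fun c : ↥D => orderOf ((a:G) * (c:G)) = 3), f c = 0 := by
  classical
  have hfin : D.Finite := Set.toFinite D
  set s := Finset.univ.filter (fun c : ↥D => orderOf ((a:G) * (c:G)) = 3) with hs
  rw [← Finset.sum_filter_add_sum_filter_not s
    (fun c : ↥D => orderOf ((b:G) * (c:G)) = 3) f]
  have hz2 : ∑ c ∈ s.filter (fun c : ↥D => ¬ orderOf ((b:G) * (c:G)) = 3), f c = 0 := by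
    refine Finset.sum_eq_zero fun c hc => ?_
    rw [Finset.mem_filter, hs, Finset.mem_filter] at hc
    obtain ⟨⟨-, hca⟩, hcb⟩ := hc
    have hbc : (b:G) ≠ c := by
      rintro hbc
      rw [← hbc] at hca
      rw [hD.orderOf_eq_two a.2 b.2 hab hcomm] at hca
      omega
    rcases hD.order_dichotomy hfin b.2 c.2 hbc with h2 | h3
    · exact hR3 c hbc h2
    · exact absurd h3 hcb
  rw [hz2, add_zero]
  refine sum_invol_zero f (fun c => setConj hD.selfConj c b) ?_ ?_ ?_ ?_
  · intro c hc
    rw [Finset.mem_filter, hs, Finset.mem_filter] at hc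
    obtain ⟨⟨-, hca⟩, hcb⟩ := hc
    rw [Finset.mem_filter, hs, Finset.mem_filter]
    refine ⟨⟨Finset.mem_univ _, ?_⟩, ?_⟩
    · rw [coe_setConj hD, orderOf_mul_conjBy hcomm]
      exact hca
    · rw [coe_setConj hD, orderOf_mul_conjBy rfl]
      exact hcb
  · intro c _; exact setConj_setConj hD c b
  · intro c hc heq
    rw [Finset.mem_filter, hs, Finset.mem_filter] at hc
    have h3 : orderOf ((c:G) * b) = 3 := by rw [orderOf_mul_comm']; exact hc.2
    exact hD.not_commute_of_three c.2 b.2 h3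
      (commute_of_conjBy_eq (congrArg Subtype.val heq))
  · intro c hc
    rw [Finset.mem_filter] at hc
    have := hR2 c hc.2
    linear_combination this

lemma sumS7 (hD : Is3TG G D) (f : ↥D → k) {a b : ↥D}
    (h3 : orderOf ((a:G) * (b:G)) = 3)
    (hR1 : f b = 0)
    (hR2 : ∀ c : ↥D, orderOf ((b:G) * c) = 3 →
      f c = - f (setConj hD.selfConj c b))
    (hR3 : ∀ c : ↥D, (b:G) ≠ c → orderOf ((b:G) * c) = 2 → f c = 0) :
    ∑ c ∈ Finset.univ.filter (fun c : ↥D => orderOf ((a:G) * (c:G)) = 3), f c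
      = - f a - ∑ c ∈ Finset.univ.filter (fun c : ↥D =>
          ((a:G) ≠ (c:G) ∧ orderOf ((a:G) * c) = 2) ∧ orderOf ((b:G) * c) = 3), f c := by
  classical
  have hfin : D.Finite := Set.toFinite D
  set P := fun c : ↥D => orderOf ((a:G) * (c:G)) = 3 with hP
  set Q := fun c : ↥D => orderOf ((b:G) * (c:G)) = 3 with hQ
  -- LHS equals the sum over P ∧ Q
  have hL : ∑ c ∈ Finset.univ.filter P, f c
      = ∑ c ∈ (Finset.univ.filter P).filter Q, f c := by
    rw [← Finset.sum_filter_add_sum_filter_not (Finset.univ.filter P) Q f]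
    have hz : ∑ c ∈ (Finset.univ.filter P).filter (fun c => ¬ Q c), f c = 0 := by
      refine Finset.sum_eq_zero fun c hc => ?_
      rw [Finset.mem_filter, Finset.mem_filter] at hc
      obtain ⟨⟨-, hca⟩, hcb⟩ := hc
      rcases eq_or_ne (b:G) (c:G) with hbc | hbc
      · have : b = c := Subtype.ext hbc
        rw [← this]; exact hR1
      rcases hD.order_dichotomy hfin b.2 c.2 hbc with h2 | h33
      · exact hR3 c hbc h2
      · exact absurd h33 hcb
    rw [hz, add_zero]
  -- the full Q-sum vanishes
  have hZ : ∑ c ∈ Finset.univ.filter Q, f c = 0 := sumZ hD f b hR2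
  -- split the Q-sum by the relation of c to a
  have hsplit : ∑ c ∈ Finset.univ.filter Q, f c
      = f a + (∑ c ∈ Finset.univ.filter (fun c : ↥D =>
            ((a:G) ≠ (c:G) ∧ orderOf ((a:G) * c) = 2) ∧ Q c), f c
          + ∑ c ∈ (Finset.univ.filter P).filter Q, f c) := by
    rw [← Finset.sum_filter_add_sum_filter_not (Finset.univ.filter Q)
      (fun c : ↥D => c = a) f]
    have hQa : Q a := by
      rw [hQ]
      show orderOf ((b:G) * (a:G)) = 3
      rw [orderOf_mul_comm' (b:G) (a:G)]
      exact h3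
    have h1 : (Finset.univ.filter Q).filter (fun c : ↥D => c = a) = {a} := by
      ext c
      simp only [Finset.mem_filter, Finset.mem_univ, true_and, Finset.mem_singleton]
      constructor
      · exact fun hc => hc.2
      · intro hc
        subst hc
        exact ⟨hQa, rfl⟩
    have h2 : (Finset.univ.filter Q).filter (fun c : ↥D => ¬ c = a)
        = Finset.univ.filter (fun c : ↥D =>
            ((a:G) ≠ (c:G) ∧ orderOf ((a:G) * c) = 2) ∧ Q c)
          ∪ (Finset.univ.filter P).filter Q := by
      ext c
      simp only [Finset.mem_filter, Finset.mem_univ, true_and, Finset.mem_union, hP]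
      constructor
      · rintro ⟨hq, hac⟩
        have hac' : (a:G) ≠ (c:G) := fun hh => hac (Subtype.ext hh).symm
        rcases hD.order_dichotomy hfin a.2 c.2 hac' with h2' | h3'
        · exact Or.inl ⟨⟨hac', h2'⟩, hq⟩
        · exact Or.inr ⟨h3', hq⟩
      · rintro (⟨⟨hac, -⟩, hq⟩ | ⟨hp, hq⟩)
        · exact ⟨hq, fun hh => hac (by rw [hh])⟩
        · refine ⟨hq, ?_⟩
          intro hh
          subst hh
          rw [hD.sq c.2, orderOf_one] at hp
          omega
    have hdisj : Disjoint (Finset.univ.filter (fun c : ↥D =>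
            ((a:G) ≠ (c:G) ∧ orderOf ((a:G) * c) = 2) ∧ Q c))
          ((Finset.univ.filter P).filter Q) := by
      rw [Finset.disjoint_left]
      intro c hc1 hc2
      simp only [Finset.mem_filter, Finset.mem_univ, true_and, hP] at hc1 hc2
      obtain ⟨⟨-, h2'⟩, -⟩ := hc1
      obtain ⟨h3', -⟩ := hc2
      rw [h2'] at h3'
      omega
    rw [h1, h2, Finset.sum_singleton, Finset.sum_union hdisj]
  rw [hL]
  rw [hsplit] at hZ
  linear_combination hZ

end SumAux

/-- The relations (R1)–(R7) characterize derivations of the Matsuo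
algebra `M_{1/2}(k, (G, D))`.  Here `d (bvec k a) b` is the coefficient `d(a)_b`,
`setConj hD.selfConj a b` is the conjugate `a^b`, `a ⊥ b` is expressed by
`(a : G) ≠ b ∧ orderOf ((a : G) * b) = 2` and `a ⊥̸ b` by `orderOf ((a : G) * b) = 3`. -/
theorem statement1 (k : Type*) [Field k] (hk2 : (2 : k) ≠ 0)
    {G : Type*} [Group G] {D : Set G} [Fintype ↥D] (hD : Is3TG G D)
    (d : (↥D → k) →ₗ[k] (↥D → k)) :
    IsDerivation k (matsuoMulD k hD.selfConj ((1 : k) / 2)) d ↔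
      ((∀ a : ↥D, d (bvec k a) a = 0) ∧
       (∀ a b : ↥D, orderOf ((a : G) * b) = 3 →
          d (bvec k a) b = - d (bvec k a) (setConj hD.selfConj b a)) ∧
       (∀ a b : ↥D, (a : G) ≠ b → orderOf ((a : G) * b) = 2 → d (bvec k a) b = 0) ∧
       (∀ a b c : ↥D, (a : G) ≠ b → orderOf ((a : G) * b) = 2 →
          orderOf ((a : G) * c) = 3 → orderOf ((b : G) * c) = 3 →
          d (bvec k a) c + d (bvec k b) c
            + d (bvec k a) (setConj hD.selfConj (setConj hD.selfConj c a) b)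
            + d (bvec k b) (setConj hD.selfConj (setConj hD.selfConj c a) b) = 0) ∧
       (∀ a b e : ↥D, orderOf ((a : G) * b) = 3 → orderOf ((a : G) * e) = 3 →
          (b : G) ≠ e → orderOf ((b : G) * e) = 2 →
          d (bvec k (setConj hD.selfConj a b)) e
            = d (bvec k a) e + d (bvec k b) (setConj hD.selfConj e a)) ∧
       (∀ a b e : ↥D, orderOf ((a : G) * b) = 3 → orderOf ((e : G) * a) = 3 →
          orderOf ((e : G) * b) = 3 → orderOf ((e : G) * conjBy (a : G) (b : G)) = 3 →
          d (bvec k (setConj hD.selfConj a b)) e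
            = d (bvec k a) (setConj hD.selfConj e b)
              + d (bvec k b) (setConj hD.selfConj e a)) ∧
       (∀ a b : ↥D, orderOf ((a : G) * b) = 3 →
          2 * d (bvec k b) a + d (bvec k a) b + d (bvec k (setConj hD.selfConj a b)) a
            - ∑ e ∈ Finset.univ.filter (fun e : ↥D =>
                ((a : G) ≠ (e : G) ∧ orderOf ((a : G) * e) = 2) ∧ orderOf ((b : G) * e) = 3),
                d (bvec k b) e = 0)) := by
  classical
  have hfin : D.Finite := Set.toFinite D
  have hq4 : (2:k) * ((2:k) * ((1:k)/2/2)) = 1 := by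
    field_simp
  have hcancel : ∀ x y : k, (2:k) * x = 2 * y → x = y :=
    fun x y hxy => mul_left_cancel₀ hk2 hxy
  have hsplit : ∀ w x y z : k, (2:k)*((2:k)*((w+x)+(y+z)))
      = ((2:k)*((2:k)*w) + (2:k)*((2:k)*x)) + ((2:k)*((2:k)*y) + (2:k)*((2:k)*z)) :=
    fun w x y z => by ring
  have push_ifA : ∀ (C : Prop) (inst : Decidable C) (x S : k),
      (2:k)*((2:k)*(@ite k C inst (x + (1:k)/2/2*S) 0))
        = @ite k C inst ((2:k)*((2:k)*x) + S) 0 := by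
    intro C inst x S
    by_cases hC : C
    · rw [if_pos hC, if_pos hC]
      linear_combination S * hq4
    · rw [if_neg hC, if_neg hC]
      ring
  have push_ifB : ∀ (C : Prop) (inst : Decidable C) (W : k),
      (2:k)*((2:k)*(@ite k C inst ((1:k)/2/2*W) 0)) = @ite k C inst W 0 := by
    intro C inst W
    by_cases hC : C
    · rw [if_pos hC, if_pos hC]
      linear_combination W * hq4
    · rw [if_neg hC, if_neg hC]
      ring
  have hneOf : ∀ {x y : ↥D}, orderOf ((x:G) * y) ≠ 1 → x ≠ y :=
    fun {x y} h => ne_of_orderOf_ne_one hD x y h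
  have hline : ∀ (a b : ↥D), a ≠ b → orderOf ((a:G) * b) = 3 → ∀ e : ↥D,
      (2:k)*((2:k)*(d (matsuoBasisD k hD.selfConj ((1:k)/2) a b) e))
        = d (bvec k a) e + d (bvec k b) e
            - d (bvec k (setConj hD.selfConj a b)) e := by
    intro a b hne h3 e
    rw [matsuoBasisD_of_three hne h3, map_smul, map_sub, map_add]
    rw [Pi.smul_apply, smul_eq_mul, Pi.sub_apply, Pi.add_apply]
    linear_combination (d (bvec k a) e + d (bvec k b) e
      - d (bvec k (setConj hD.selfConj a b)) e) * hq4
  rw [isDerivation_iff_basis]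
  constructor
  · -- derivation ⇒ relations
    intro H
    have key4 : ∀ a b e : ↥D,
        (2:k)*((2:k)*(d (matsuoBasisD k hD.selfConj ((1:k)/2) a b) e))
        = ((if e = b then (2:k)*((2:k)*(d (bvec k a) b)) + (∑ c ∈ Finset.univ.filter
              (fun c : ↥D => orderOf ((c:G) * (b:G)) = 3), d (bvec k a) c) else 0)
          + (if orderOf ((e:G) * (b:G)) = 3 then
              d (bvec k a) e - d (bvec k a) (setConj hD.selfConj e b) else 0))
        + ((if e = a then (2:k)*((2:k)*(d (bvec k b) a)) + (∑ c ∈ Finset.univ.filter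
              (fun c : ↥D => orderOf ((c:G) * (a:G)) = 3), d (bvec k b) c) else 0)
          + (if orderOf ((e:G) * (a:G)) = 3 then
              d (bvec k b) e - d (bvec k b) (setConj hD.selfConj e a) else 0)) := by
      intro a b e
      have hk4 := congrArg (fun z => (2:k)*((2:k)*z)) (congrFun (H a b) e)
      rw [Pi.add_apply, matsuoMulD_comm hD ((1:k)/2) (bvec k a) (d (bvec k b)),
        coefFormula hD, coefFormula hD, hsplit, push_ifA, push_ifB, push_ifA,
        push_ifB] at hk4
      exact hk4
    have R2 : ∀ a b : ↥D, orderOf ((a:G) * b) = 3 →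
        d (bvec k a) b = - d (bvec k a) (setConj hD.selfConj b a) := by
      intro a b h3
      have hba3 : orderOf ((b:G) * a) = 3 := by
        rw [orderOf_mul_comm' (b:G) (a:G)]; exact h3
      have hbna : b ≠ a := hneOf (by rw [hba3]; omega)
      have hk := key4 a a b
      rw [matsuoBasisD_self, if_neg hbna, if_pos hba3] at hk
      apply hcancel
      linear_combination hk
    have R1 : ∀ a : ↥D, d (bvec k a) a = 0 := by
      intro a
      have haa1 : orderOf ((a:G) * a) = 1 := by rw [hD.sq a.2, orderOf_one]
      have hS : ∑ c ∈ Finset.univ.filter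
          (fun c : ↥D => orderOf ((a:G) * (c:G)) = 3), d (bvec k a) c = 0 :=
        sumZ hD (d (bvec k a)) a (fun c h3 => R2 a c h3)
      have hk := key4 a a a
      rw [matsuoBasisD_self, if_pos rfl, if_neg (by rw [haa1]; omega),
        filter_orderOf_comm a, hS] at hk
      apply hcancel; apply hcancel
      linear_combination -hk
    have R3 : ∀ a b : ↥D, (a:G) ≠ b → orderOf ((a:G) * b) = 2 → d (bvec k a) b = 0 := by
      intro a b hne h2
      have hbna : b ≠ a := (hneOf (by rw [h2]; omega)).symm
      have hba : ¬ orderOf ((b:G) * a) = 3 := by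
        rw [orderOf_mul_comm' (b:G) (a:G), h2]; omega
      have hk := key4 a a b
      rw [matsuoBasisD_self, if_neg hbna, if_neg hba] at hk
      apply hcancel; apply hcancel
      linear_combination hk
    refine ⟨R1, R2, R3, ?_, ?_, ?_, ?_⟩
    · -- R4
      intro a b c hne h2ab h3ac h3bc
      have hsne : a ≠ b := fun hh => hne (congrArg Subtype.val hh)
      have hn3 : ¬ orderOf ((a:G) * b) = 3 := by rw [h2ab]; omega
      have hcomm : (a:G) * b = b * a := hD.commute_of_ne_three hfin a.2 b.2 hn3
      have hcb : c ≠ b := hneOf (by rw [orderOf_mul_comm' (c:G) (b:G), h3bc]; omega)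
      have hca : c ≠ a := hneOf (by rw [orderOf_mul_comm' (c:G) (a:G), h3ac]; omega)
      have h3cb : orderOf ((c:G) * b) = 3 := by
        rw [orderOf_mul_comm' (c:G) (b:G)]; exact h3bc
      have h3ca : orderOf ((c:G) * a) = 3 := by
        rw [orderOf_mul_comm' (c:G) (a:G)]; exact h3ac
      have hk := key4 a b c
      rw [matsuoBasisD_of_two hsne hn3, map_zero, Pi.zero_apply,
        if_neg hcb, if_neg hca, if_pos h3cb, if_pos h3ca] at hk
      have hττ : setConj hD.selfConj (setConj hD.selfConj c b) a
          = setConj hD.selfConj (setConj hD.selfConj c a) b := by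
        apply Subtype.ext
        show conjBy (conjBy (c:G) (b:G)) (a:G) = conjBy (conjBy (c:G) (a:G)) (b:G)
        rw [conjBy_conjBy_mul, conjBy_conjBy_mul, hcomm]
      have hA := R2 a (setConj hD.selfConj c b)
        (by rw [coe_setConj hD, orderOf_mul_conjBy hcomm]; exact h3ac)
      rw [hττ] at hA
      have hB := R2 b (setConj hD.selfConj c a)
        (by rw [coe_setConj hD, orderOf_mul_conjBy hcomm.symm]; exact h3bc)
      linear_combination -hk + hA + hB
    · -- R5
      intro a b e h3ab h3ae hbe h2be
      have hne : a ≠ b := hneOf (by rw [h3ab]; omega)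
      have heb : e ≠ b := fun hh => hbe (congrArg Subtype.val hh.symm)
      have hn3eb : ¬ orderOf ((e:G) * b) = 3 := by
        rw [orderOf_mul_comm' (e:G) (b:G), h2be]; omega
      have hea : e ≠ a := (hneOf (by rw [h3ae]; omega)).symm
      have h3ea : orderOf ((e:G) * a) = 3 := by
        rw [orderOf_mul_comm' (e:G) (a:G)]; exact h3ae
      have hk := key4 a b e
      rw [hline a b hne h3ab e, if_neg heb, if_neg hn3eb, if_neg hea, if_pos h3ea] at hk
      linear_combination -hk
    · -- R6
      intro a b e h3ab h3ea h3eb h3eτ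
      have hne : a ≠ b := hneOf (by rw [h3ab]; omega)
      have hea : e ≠ a := hneOf (by rw [h3ea]; omega)
      have heb : e ≠ b := hneOf (by rw [h3eb]; omega)
      have hk := key4 a b e
      rw [hline a b hne h3ab e, if_neg heb, if_neg hea, if_pos h3eb, if_pos h3ea] at hk
      linear_combination -hk
    · -- R7
      intro a b h3ab
      have hne : a ≠ b := hneOf (by rw [h3ab]; omega)
      have haa3 : ¬ orderOf ((a:G) * a) = 3 := by
        rw [hD.sq a.2, orderOf_one]; omega
      have hk := key4 a b a
      rw [hline a b hne h3ab a, if_neg hne, if_pos h3ab, if_pos rfl, if_neg haa3,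
        filter_orderOf_comm a] at hk
      have hx : d (bvec k a) (setConj hD.selfConj a b) = - d (bvec k a) b := by
        rw [setConj_comm hD h3ab]
        linear_combination R2 a b h3ab
      have hSum := sumS7 hD (d (bvec k b)) h3ab (R1 b)
        (fun c h => R2 b c h) (fun c h1 h2 => R3 b c h1 h2)
      linear_combination -hk + hx - hSum
  · -- relations ⇒ derivation
    rintro ⟨R1, R2, R3, R4, R5, R6, R7⟩
    intro a b
    funext e
    apply hcancel; apply hcancel
    rw [Pi.add_apply, matsuoMulD_comm hD ((1:k)/2) (bvec k a) (d (bvec k b)),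
      coefFormula hD, coefFormula hD, hsplit, push_ifA, push_ifB, push_ifA, push_ifB]
    rcases eq_or_ne a b with rfl | hne
    · -- a = b
      rw [matsuoBasisD_self]
      have haa1 : orderOf ((a:G) * a) = 1 := by rw [hD.sq a.2, orderOf_one]
      rcases eq_or_ne e a with rfl | hea
      · have hS : ∑ c ∈ Finset.univ.filter
            (fun c : ↥D => orderOf ((e:G) * (c:G)) = 3), d (bvec k e) c = 0 :=
          sumZ hD (d (bvec k e)) e (fun c h3 => R2 e c h3)
        rw [if_pos rfl, if_neg (by rw [haa1]; omega), filter_orderOf_comm e, hS]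
        linear_combination (-(2:k)*2) * R1 e
      · rw [if_neg hea]
        by_cases h3 : orderOf ((e:G) * a) = 3
        · rw [if_pos h3]
          have h3' : orderOf ((a:G) * e) = 3 := by
            rw [orderOf_mul_comm' (a:G) (e:G)]; exact h3
          linear_combination 2 * (R2 a e h3')
        · rw [if_neg h3]
          have hcne : (a:G) ≠ e := fun hh => hea (Subtype.ext hh.symm)
          have h2 : orderOf ((a:G) * e) = 2 := by
            rcases hD.order_dichotomy hfin a.2 e.2 hcne with h | h
            · exact h
            · exact absurd (by rw [orderOf_mul_comm' (e:G) (a:G)]; exact h) h3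
          linear_combination ((2:k)*2) * (R3 a e hcne h2)
    · -- a ≠ b
      have hne' : (a:G) ≠ b := fun hh => hne (Subtype.ext hh)
      rcases hD.order_dichotomy hfin a.2 b.2 hne' with h2ab | h3ab
      · -- commuting case
        have hn3 : ¬ orderOf ((a:G) * b) = 3 := by rw [h2ab]; omega
        have hcomm : (a:G) * b = b * a := hD.commute_of_ne_three hfin a.2 b.2 hn3
        have hbb1 : orderOf ((b:G) * b) = 1 := by rw [hD.sq b.2, orderOf_one]
        have haa1 : orderOf ((a:G) * a) = 1 := by rw [hD.sq a.2, orderOf_one]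
        rw [matsuoBasisD_of_two hne hn3, map_zero, Pi.zero_apply]
        rcases eq_or_ne e a with rfl | hea
        · rw [if_neg hne, if_neg (by rw [h2ab]; omega),
            if_pos rfl, if_neg (by rw [haa1]; omega), filter_orderOf_comm e]
          have hR3ba : d (bvec k b) e = 0 := R3 b e
            (fun hh => hne' hh.symm)
            (by rw [orderOf_mul_comm' (b:G) (e:G)]; exact h2ab)
          have hsC := sumC hD (d (bvec k b)) hne' hcomm
            (fun c h => R2 b c h) (fun c h1 h2 => R3 b c h1 h2)
          linear_combination (-(2:k)*2) * hR3ba - hsC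
        · rcases eq_or_ne e b with rfl | heb
          · rw [if_pos rfl, if_neg (by rw [hbb1]; omega), if_neg hea,
              if_neg (by rw [orderOf_mul_comm' (e:G) (a:G), h2ab]; omega),
              filter_orderOf_comm e]
            have hR3ab : d (bvec k a) e = 0 := R3 a e hne' h2ab
            have hsC := sumC hD (d (bvec k a)) (fun hh => hne' hh.symm) hcomm.symm
              (fun c h => R2 a c h) (fun c h1 h2 => R3 a c h1 h2)
            linear_combination (-(2:k)*2) * hR3ab - hsC
          · rw [if_neg heb, if_neg hea]
            by_cases h3eb : orderOf ((e:G) * b) = 3 <;>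
              by_cases h3ea : orderOf ((e:G) * a) = 3
            · rw [if_pos h3eb, if_pos h3ea]
              have h3ae : orderOf ((a:G) * e) = 3 := by
                rw [orderOf_mul_comm' (a:G) (e:G)]; exact h3ea
              have h3be : orderOf ((b:G) * e) = 3 := by
                rw [orderOf_mul_comm' (b:G) (e:G)]; exact h3eb
              have hR4 := R4 a b e hne' h2ab h3ae h3be
              have hττ : setConj hD.selfConj (setConj hD.selfConj e b) a
                  = setConj hD.selfConj (setConj hD.selfConj e a) b := by
                apply Subtype.ext
                show conjBy (conjBy (e:G) (b:G)) (a:G) = conjBy (conjBy (e:G) (a:G)) (b:G)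
                rw [conjBy_conjBy_mul, conjBy_conjBy_mul, hcomm]
              have hA := R2 a (setConj hD.selfConj e b)
                (by rw [coe_setConj hD, orderOf_mul_conjBy hcomm]; exact h3ae)
              rw [hττ] at hA
              have hB := R2 b (setConj hD.selfConj e a)
                (by rw [coe_setConj hD, orderOf_mul_conjBy hcomm.symm]; exact h3be)
              linear_combination -hR4 + hA + hB
            · rw [if_pos h3eb, if_neg h3ea]
              have hane : (a:G) ≠ e := fun hh => hea (Subtype.ext hh.symm)
              have h2ae : orderOf ((a:G) * e) = 2 := by
                rcases hD.order_dichotomy hfin a.2 e.2 hane with h | h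
                · exact h
                · exact absurd (by rw [orderOf_mul_comm' (e:G) (a:G)]; exact h) h3ea
              have ho : orderOf ((a:G) * (setConj hD.selfConj e b : G)) = 2 := by
                rw [coe_setConj hD, orderOf_mul_conjBy hcomm]; exact h2ae
              have hz1 : d (bvec k a) e = 0 := R3 a e hane h2ae
              have hz2 : d (bvec k a) (setConj hD.selfConj e b) = 0 := by
                refine R3 a (setConj hD.selfConj e b) ?_ ho
                intro hh
                rw [← hh, hD.sq a.2, orderOf_one] at ho
                omega
              linear_combination -hz1 + hz2
            · rw [if_neg h3eb, if_pos h3ea]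
              have hbne : (b:G) ≠ e := fun hh => heb (Subtype.ext hh.symm)
              have h2be : orderOf ((b:G) * e) = 2 := by
                rcases hD.order_dichotomy hfin b.2 e.2 hbne with h | h
                · exact h
                · exact absurd (by rw [orderOf_mul_comm' (e:G) (b:G)]; exact h) h3eb
              have ho : orderOf ((b:G) * (setConj hD.selfConj e a : G)) = 2 := by
                rw [coe_setConj hD, orderOf_mul_conjBy hcomm.symm]; exact h2be
              have hz1 : d (bvec k b) e = 0 := R3 b e hbne h2be
              have hz2 : d (bvec k b) (setConj hD.selfConj e a) = 0 := by
                refine R3 b (setConj hD.selfConj e a) ?_ ho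
                intro hh
                rw [← hh, hD.sq b.2, orderOf_one] at ho
                omega
              linear_combination -hz1 + hz2
            · rw [if_neg h3eb, if_neg h3ea]
              ring
      · -- o(ab) = 3 case
        rw [hline a b hne h3ab e]
        have hba3 : orderOf ((b:G) * a) = 3 := by
          rw [orderOf_mul_comm' (b:G) (a:G)]; exact h3ab
        have haa1 : orderOf ((a:G) * a) = 1 := by rw [hD.sq a.2, orderOf_one]
        have hbb1 : orderOf ((b:G) * b) = 1 := by rw [hD.sq b.2, orderOf_one]
        rcases eq_or_ne e a with rfl | hea
        · rw [if_neg hne, if_pos h3ab, if_pos rfl, if_neg (by rw [haa1]; omega),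
            filter_orderOf_comm e]
          have hx : d (bvec k e) (setConj hD.selfConj e b) = - d (bvec k e) b := by
            rw [setConj_comm hD h3ab]
            linear_combination R2 e b h3ab
          have hSum := sumS7 hD (d (bvec k b)) h3ab (R1 b)
            (fun c h => R2 b c h) (fun c h1 h2 => R3 b c h1 h2)
          linear_combination hx - hSum - R7 e b h3ab
        · rcases eq_or_ne e b with rfl | heb
          · rw [if_pos rfl, if_neg (by rw [hbb1]; omega), if_neg hea,
              if_pos hba3, filter_orderOf_comm e, setConj_comm hD h3ab]
            have hy : d (bvec k e) (setConj hD.selfConj e a) = - d (bvec k e) a := by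
              rw [setConj_comm hD hba3]
              linear_combination R2 e a hba3
            have hSum := sumS7 hD (d (bvec k a)) hba3 (R1 a)
              (fun c h => R2 a c h) (fun c h1 h2 => R3 a c h1 h2)
            linear_combination hy - hSum - R7 e a hba3
          · rcases eq_or_ne e (setConj hD.selfConj a b) with rfl | heτ
            · -- e = a^b
              have h3τb : orderOf ((setConj hD.selfConj a b : G) * b) = 3 := by
                rw [orderOf_mul_comm' ((setConj hD.selfConj a b : G)) (b:G)]
                exact orderOf_mul_setConj_left hD h3ab
              have h3τa : orderOf ((setConj hD.selfConj a b : G) * a) = 3 := by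
                rw [orderOf_mul_comm' ((setConj hD.selfConj a b : G)) (a:G)]
                exact orderOf_mul_setConj_right hD h3ab
              have hτb : setConj hD.selfConj a b ≠ b := hneOf (by rw [h3τb]; omega)
              have hτa : setConj hD.selfConj a b ≠ a := hneOf (by rw [h3τa]; omega)
              have hτa2 : setConj hD.selfConj (setConj hD.selfConj a b) a = b := by
                rw [setConj_comm hD h3ab]
                exact setConj_setConj hD b a
              rw [if_neg hτb, if_neg hτa, if_pos h3τb, if_pos h3τa,
                setConj_setConj hD a b, hτa2]
              linear_combination R1 a + R1 b - R1 (setConj hD.selfConj a b)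
            · -- e off the line
              rw [if_neg heb, if_neg hea]
              by_cases h3eb : orderOf ((e:G) * b) = 3 <;>
                by_cases h3ea : orderOf ((e:G) * a) = 3
              · rw [if_pos h3eb, if_pos h3ea]
                by_cases h3eτ : orderOf ((e:G) * (setConj hD.selfConj a b : G)) = 3
                · have hR6 := R6 a b e h3ab h3ea h3eb
                    (by rw [← coe_setConj hD]; exact h3eτ)
                  linear_combination -hR6
                · have hτne : (e:G) ≠ (setConj hD.selfConj a b : G) :=
                    fun hh => heτ (Subtype.ext hh)
                  have h2eτ : orderOf ((e:G) * (setConj hD.selfConj a b : G)) = 2 := by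
                    rcases hD.order_dichotomy hfin e.2 (setConj hD.selfConj a b).2 hτne
                      with h | h
                    · exact h
                    · exact absurd h h3eτ
                  have hz1 : d (bvec k (setConj hD.selfConj a b)) e = 0 := by
                    refine R3 (setConj hD.selfConj a b) e ?_ ?_
                    · exact fun hh => heτ (Subtype.ext hh.symm)
                    · rw [orderOf_mul_comm' ((setConj hD.selfConj a b : G)) (e:G)]
                      exact h2eτ
                  have hbr : conjBy (b:G) (a:G) = conjBy (a:G) (b:G) := by
                    show (a:G)⁻¹ * b * a = (b:G)⁻¹ * a * b
                    rw [hD.inv_eq a.2, hD.inv_eq b.2]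
                    exact hD.braid a.2 b.2 h3ab
                  have ho2 : orderOf ((a:G) * (setConj hD.selfConj e b : G)) = 2 := by
                    rw [coe_setConj hD, orderOf_mul_conjBy_flip (hD.sq b.2),
                      orderOf_mul_comm' (conjBy (a:G) (b:G)) (e:G), ← coe_setConj hD]
                    exact h2eτ
                  have hz2 : d (bvec k a) (setConj hD.selfConj e b) = 0 := by
                    refine R3 a (setConj hD.selfConj e b) ?_ ho2
                    intro hh
                    rw [← hh, hD.sq a.2, orderOf_one] at ho2
                    omega
                  have ho3 : orderOf ((b:G) * (setConj hD.selfConj e a : G)) = 2 := by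
                    rw [coe_setConj hD, orderOf_mul_conjBy_flip (hD.sq a.2), hbr,
                      orderOf_mul_comm' (conjBy (a:G) (b:G)) (e:G), ← coe_setConj hD]
                    exact h2eτ
                  have hz3 : d (bvec k b) (setConj hD.selfConj e a) = 0 := by
                    refine R3 b (setConj hD.selfConj e a) ?_ ho3
                    intro hh
                    rw [← hh, hD.sq b.2, orderOf_one] at ho3
                    omega
                  linear_combination -hz1 + hz2 + hz3
              · rw [if_pos h3eb, if_neg h3ea]
                have hane : (a:G) ≠ e := fun hh => hea (Subtype.ext hh.symm)
                have h2ae : orderOf ((a:G) * e) = 2 := by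
                  rcases hD.order_dichotomy hfin a.2 e.2 hane with h | h
                  · exact h
                  · exact absurd (by rw [orderOf_mul_comm' (e:G) (a:G)]; exact h) h3ea
                have h3be : orderOf ((b:G) * e) = 3 := by
                  rw [orderOf_mul_comm' (b:G) (e:G)]; exact h3eb
                have hR5 := R5 b a e hba3 h3be hane h2ae
                rw [← setConj_comm hD h3ab] at hR5
                linear_combination -hR5
              · rw [if_neg h3eb, if_pos h3ea]
                have hbne : (b:G) ≠ e := fun hh => heb (Subtype.ext hh.symm)
                have h2be : orderOf ((b:G) * e) = 2 := by
                  rcases hD.order_dichotomy hfin b.2 e.2 hbne with h | h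
                  · exact h
                  · exact absurd (by rw [orderOf_mul_comm' (e:G) (b:G)]; exact h) h3eb
                have h3ae : orderOf ((a:G) * e) = 3 := by
                  rw [orderOf_mul_comm' (a:G) (e:G)]; exact h3ea
                have hR5 := R5 a b e h3ab h3ae hbne h2be
                linear_combination -hR5
              · rw [if_neg h3eb, if_neg h3ea]
                have hane : (a:G) ≠ e := fun hh => hea (Subtype.ext hh.symm)
                have hbne : (b:G) ≠ e := fun hh => heb (Subtype.ext hh.symm)
                have h2ae : orderOf ((a:G) * e) = 2 := by
                  rcases hD.order_dichotomy hfin a.2 e.2 hane with h | h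
                  · exact h
                  · exact absurd (by rw [orderOf_mul_comm' (e:G) (a:G)]; exact h) h3ea
                have h2be : orderOf ((b:G) * e) = 2 := by
                  rcases hD.order_dichotomy hfin b.2 e.2 hbne with h | h
                  · exact h
                  · exact absurd (by rw [orderOf_mul_comm' (e:G) (b:G)]; exact h) h3eb
                have hoτ : orderOf ((setConj hD.selfConj a b : G) * e) = 2 := by
                  rw [coe_setConj hD,
                    orderOf_conjBy_mul (hD.commute_of_ne_three hfin e.2 b.2 h3eb)]
                  exact h2ae
                have hz3 : d (bvec k (setConj hD.selfConj a b)) e = 0 := by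
                  refine R3 (setConj hD.selfConj a b) e ?_ hoτ
                  intro hh
                  rw [hh, hD.sq e.2, orderOf_one] at hoτ
                  omega
                linear_combination R3 a e hane h2ae + R3 b e hbne h2be - hz3
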